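/- arXiv:1902.10055 — 2 statements merged into one kernel-verified Lean document; each statement's English description precedes it below -/
import Mathlib

section
/- Let TP ⊆ R_max^n be a nonempty compact tropical polyhedron. Then the set M(TP) of all minimal points of TP is a nonempty min-essential subset: for every x ∈ R_max^n, min_{z ∈ TP} x^T z is attained at some minimal point of TP. -/
open Finset

/-- Tropical (max-plus) scalar product over `R_max = ℝ ∪ {-∞}`,
modelled as `WithBot ℝ`: `x^T y = max_i (x_i + y_i)`. -/
noncomputable def tdot {n : ℕ} (x y : Fin n → WithBot ℝ) : WithBot ℝ :=
  Finset.univ.sup (fun i => x i + y i)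

noncomputable def eexp : WithBot ℝ → ℝ := fun a => a.recBotCoe 0 Real.exp

/-- Tropical matrix-vector product. -/
noncomputable def tapply {m n : ℕ} (A : Fin m → Fin n → WithBot ℝ)
    (x : Fin n → WithBot ℝ) : Fin m → WithBot ℝ :=
  fun i => Finset.univ.sup (fun j => A i j + x j)

/-! The coordinatewise exponential carries `TP` onto a compact subset of `ℝⁿ`, on which
`x^T z` becomes the continuous function `u ↦ max_i e^{x_i} u_i`; so `x^T z` has a minimiser
`z₀` on `TP`. Minimising the coordinate sum over the points of `TP` below `z₀` gives a minimal
point `m ≤ z₀`, and isotonicity of `x^T z` makes `m` a minimiser too. -/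

lemma eexp_nonneg (a : WithBot ℝ) : 0 ≤ eexp a := by
  induction a using WithBot.recBotCoe with
  | bot => exact le_rfl
  | coe a => exact (Real.exp_pos a).le

lemma eexp_strictMono : StrictMono eexp := by
  intro a b hab
  induction b using WithBot.recBotCoe with
  | bot => exact absurd hab not_lt_bot
  | coe b =>
    induction a using WithBot.recBotCoe with
    | bot => exact Real.exp_pos b
    | coe a => exact Real.exp_lt_exp.2 (WithBot.coe_lt_coe.1 hab)

lemma eexp_add (a b : WithBot ℝ) : eexp (a + b) = eexp a * eexp b := by
  induction a using WithBot.recBotCoe with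
  | bot => simp [eexp]
  | coe a =>
    induction b using WithBot.recBotCoe with
    | bot => simp [eexp]
    | coe b => simp only [← WithBot.coe_add, eexp, WithBot.recBotCoe_coe, Real.exp_add]

lemma eexp_finset_sup {ι : Type*} (s : Finset ι) (f : ι → WithBot ℝ) :
    eexp (s.sup f) = ↑(s.sup fun i => (eexp (f i)).toNNReal) := by
  induction s using Finset.cons_induction with
  | empty => simp [eexp]
  | cons a s _ ih =>
    rw [Finset.sup_cons, Finset.sup_cons, eexp_strictMono.monotone.map_max, ih, NNReal.coe_max,
      Real.coe_toNNReal _ (eexp_nonneg _)]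

noncomputable def eexpPi (ι : Type*) : (ι → WithBot ℝ) ↪o (ι → ℝ) :=
  OrderEmbedding.ofMapLEIff (fun z i => eexp (z i)) fun _ _ =>
    forall_congr' fun _ => eexp_strictMono.le_iff_le

lemma tdot_mono {n : ℕ} (x : Fin n → WithBot ℝ) : Monotone (tdot x) :=
  fun _ _ h => Finset.sup_mono_fun fun i _ => add_le_add le_rfl (h i)

lemma eexp_tdot {n : ℕ} (x z : Fin n → WithBot ℝ) :
    eexp (tdot x z) = ↑(Finset.univ.sup fun i => (eexp (x i) * eexpPi (Fin n) z i).toNNReal) := by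
  simp only [tdot, eexp_finset_sup, eexp_add]
  rfl

lemma exists_isMinOn_tdot {n : ℕ} {s : Set (Fin n → WithBot ℝ)} (hne : s.Nonempty)
    (hcomp : IsCompact (eexpPi (Fin n) '' s)) (x : Fin n → WithBot ℝ) :
    ∃ z ∈ s, IsMinOn (tdot x) s z := by
  set F : (Fin n → ℝ) → ℝ := fun u => ↑(Finset.univ.sup fun i => (eexp (x i) * u i).toNNReal)
  have hF : Continuous F := by fun_prop
  have hFt : ∀ v, F (eexpPi _ v) = eexp (tdot x v) := fun v => (eexp_tdot x v).symm
  obtain ⟨_, ⟨z, hz, rfl⟩, hmin⟩ := hcomp.exists_isMinOn (hne.image _) hF.continuousOn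
  refine ⟨z, hz, fun w hw => ?_⟩
  have : F (eexpPi _ z) ≤ F (eexpPi _ w) := hmin ⟨w, hw, rfl⟩
  rw [hFt, hFt] at this
  exact eexp_strictMono.le_iff_le.1 this

lemma IsCompact.exists_minimal_le {ι : Type*} [Fintype ι] {K : Set (ι → ℝ)} (hK : IsCompact K)
    {u : ι → ℝ} (hu : u ∈ K) : ∃ v ≤ u, Minimal (· ∈ K) v := by
  obtain ⟨v, ⟨hvK, hvu⟩, hmin⟩ := (hK.inter_right isClosed_Iic).exists_isMinOn
    ⟨u, hu, Set.mem_Iic.2 le_rfl⟩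
    (continuous_finsetSum Finset.univ fun i _ => continuous_apply i).continuousOn
  refine ⟨v, hvu, hvK, fun w hwK hwv => ?_⟩
  have hsum : ∑ i, v i ≤ ∑ i, w i := hmin ⟨hwK, hwv.trans hvu⟩
  have heq := (Finset.sum_eq_sum_iff_of_le fun i _ => hwv i).1
    (le_antisymm (Finset.sum_le_sum fun i _ => hwv i) hsum)
  exact fun i => (heq i (Finset.mem_univ i)).ge

theorem minimalPoints_minEssential_general {n : ℕ}
    (TP : Set (Fin n → WithBot ℝ))
    (hne : TP.Nonempty)
    (hcomp : IsCompact ((fun x (i : Fin n) => eexp (x i)) '' TP)) :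
    ∀ x : Fin n → WithBot ℝ, ∃ mpt ∈ TP,
      (∀ z ∈ TP, z ≤ mpt → z = mpt) ∧ ∀ z ∈ TP, tdot x mpt ≤ tdot x z := by
  intro x
  obtain ⟨z, hz, hzmin⟩ := exists_isMinOn_tdot hne hcomp x
  obtain ⟨_, hle, hminK⟩ := hcomp.exists_minimal_le (Set.mem_image_of_mem (eexpPi (Fin n)) hz)
  obtain ⟨mpt, hmpt, rfl⟩ := hminK.prop
  have hmin : Minimal (· ∈ TP) mpt :=
    (minimal_mem_image_monotone_iff hmpt fun _ _ _ _ => (eexpPi (Fin n)).le_iff_le).1 hminK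
  exact ⟨mpt, hmpt, fun w hw hwm => hmin.eq_of_le hw hwm,
    fun w hw => (tdot_mono x ((eexpPi (Fin n)).le_iff_le.1 hle)).trans (hzmin hw)⟩

/-- For a nonempty compact tropical polyhedron, the set of minimal points is a
nonempty min-essential subset: for every x, the minimum of x^T z over z ∈ TP
is attained at some minimal point. -/
theorem minimalPoints_minEssential {m n : ℕ}
    (A B : Fin m → Fin n → WithBot ℝ) (c d : Fin m → WithBot ℝ)
    (TP : Set (Fin n → WithBot ℝ))
    (hTP : TP = {x : Fin n → WithBot ℝ | ∀ i, tapply A x i ⊔ c i ≤ tapply B x i ⊔ d i})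
    (hne : TP.Nonempty)
    (hcomp : IsCompact ((fun x (i : Fin n) => eexp (x i)) '' TP)) :
    ∀ x : Fin n → WithBot ℝ, ∃ mpt ∈ TP,
      (∀ z ∈ TP, z ≤ mpt → z = mpt) ∧ ∀ z ∈ TP, tdot x mpt ≤ tdot x z :=
  minimalPoints_minEssential_general TP hne hcomp
end

section
/- Let y^max ∈ R^n, let x* ∈ R^n be defined by x*_i = Σ_{k ≠ i} y^max_k, and let I, J partition {1,…,n}. Suppose x ∈ R_max^n satisfies x_i = x*_i for i ∈ I and x_j < x*_j for j ∈ J, and y ∈ R_max^n satisfies y ≤ y^max. Then x^T y = x^T y^max (tropical scalar products) holds if and only if max_{i ∈ I} ( (Σ_{k ≠ i} y^max_k) + y_i ) = Σ_{k=1}^n y^max_k. -/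
open Finset

/-- x*_i = Σ_{k ≠ i} y^max_k, as an element of R_max. -/
noncomputable def xstar {n : ℕ} (ymax : Fin n → ℝ) (i : Fin n) : WithBot ℝ :=
  ((∑ k ∈ Finset.univ.erase i, ymax k : ℝ) : WithBot ℝ)

/-! Every term `x*_i + y^max_i` equals the total `Σ_k y^max_k`, and `x^T y` splits into an `I`-part
and a `J`-part. On `J` the strict inequality `x_j < x*_j` keeps the `J`-part strictly below the
total, for `y` and for `y^max` alike; on `I` the `I`-part for `y^max` is exactly the total. Hence
`x^T y^max` is the total, and `x^T y` reaches it iff its `I`-part does. -/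

theorem sup_eq_iff_left_of_lt {α : Type*} [LinearOrder α] {a b c : α} (h : b < c) :
    a ⊔ b = c ↔ a = c := by
  constructor
  · intro hab
    rcases max_choice a b with hmax | hmax
    · rw [← hab, hmax]
    · exact absurd (hmax ▸ hab) h.ne
  · rintro rfl
    exact sup_eq_left.mpr h.le

section

variable {n : ℕ} (ymax : Fin n → ℝ)

theorem xstar_add_coe (i : Fin n) :
    xstar ymax i + (ymax i : WithBot ℝ) = ((∑ k, ymax k : ℝ) : WithBot ℝ) := by
  rw [xstar, ← WithBot.coe_add, sum_erase_add _ _ (mem_univ i)]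

theorem tdot_eq_sup_sup {I J : Finset (Fin n)} (hIJ : I ∪ J = univ) (x y : Fin n → WithBot ℝ) :
    tdot x y = I.sup (fun i => x i + y i) ⊔ J.sup (fun j => x j + y j) := by
  rw [tdot, ← hIJ, sup_union]

theorem sup_add_lt_of_lt_xstar {J : Finset (Fin n)} {x z : Fin n → WithBot ℝ}
    (hxJ : ∀ j ∈ J, x j < xstar ymax j) (hz : ∀ j ∈ J, z j ≤ (ymax j : WithBot ℝ)) :
    J.sup (fun j => x j + z j) < ((∑ k, ymax k : ℝ) : WithBot ℝ) := by
  refine (Finset.sup_lt_iff (WithBot.bot_lt_coe _)).mpr fun j hj => ?_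
  calc x j + z j ≤ x j + (ymax j : WithBot ℝ) := add_le_add_right (hz j hj) _
    _ < xstar ymax j + (ymax j : WithBot ℝ) :=
      WithBot.add_lt_add_right WithBot.coe_ne_bot (hxJ j hj)
    _ = _ := xstar_add_coe ymax j

theorem sup_xstar_add_coe {I : Finset (Fin n)} (hI : I.Nonempty) :
    I.sup (fun i => xstar ymax i + (ymax i : WithBot ℝ)) = ((∑ k, ymax k : ℝ) : WithBot ℝ) := by
  simp only [xstar_add_coe, sup_const hI]

end

theorem tdot_eq_iff_I_part_general {n : ℕ} (ymax : Fin n → ℝ) (I J : Finset (Fin n))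
    (hIJ : I ∪ J = Finset.univ) (hI : I.Nonempty)
    (x y : Fin n → WithBot ℝ)
    (hxI : ∀ i ∈ I, x i = xstar ymax i)
    (hxJ : ∀ j ∈ J, x j < xstar ymax j)
    (hy : ∀ i, y i ≤ (ymax i : WithBot ℝ)) :
    tdot x y = tdot x (fun i => (ymax i : WithBot ℝ)) ↔
      I.sup (fun i => xstar ymax i + y i) = ((∑ k, ymax k : ℝ) : WithBot ℝ) := by
  have hIpart : ∀ z : Fin n → WithBot ℝ,
      I.sup (fun i => x i + z i) = I.sup (fun i => xstar ymax i + z i) :=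
    fun z => sup_congr rfl fun i hi => by rw [hxI i hi]
  have htdot_ymax : tdot x (fun i => (ymax i : WithBot ℝ)) = ((∑ k, ymax k : ℝ) : WithBot ℝ) := by
    rw [tdot_eq_sup_sup hIJ, hIpart, sup_xstar_add_coe ymax hI]
    exact sup_eq_left.mpr (sup_add_lt_of_lt_xstar ymax hxJ fun j _ => le_rfl).le
  rw [htdot_ymax, tdot_eq_sup_sup hIJ, hIpart,
    sup_eq_iff_left_of_lt (sup_add_lt_of_lt_xstar ymax hxJ fun j _ => hy j)]

/-- Lemma: for x agreeing with x* on I and strictly below on J, and y ≤ y^max,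
the equation x^T y = x^T y^max is equivalent to
max_{i∈I} (x*_i + y_i) = Σ_k y^max_k. -/
theorem tdot_eq_iff_I_part {n : ℕ} (ymax : Fin n → ℝ) (I J : Finset (Fin n))
    (hIJ : I ∪ J = Finset.univ) (hdisj : Disjoint I J) (hI : I.Nonempty)
    (x y : Fin n → WithBot ℝ)
    (hxI : ∀ i ∈ I, x i = xstar ymax i)
    (hxJ : ∀ j ∈ J, x j < xstar ymax j)
    (hy : ∀ i, y i ≤ (ymax i : WithBot ℝ)) :
    tdot x y = tdot x (fun i => (ymax i : WithBot ℝ)) ↔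
      I.sup (fun i => xstar ymax i + y i) = ((∑ k, ymax k : ℝ) : WithBot ℝ) :=
  tdot_eq_iff_I_part_general ymax I J hIJ hI x y hxI hxJ hy
end
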